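/- Let G be an even-tempered well-tempered scoring game such that every option of G satisfies gap_0 = 0, and L(G) ≤ R(G). Then G ≈_+ R(G) and G ≈_- L(G), i.e., Lf(G + X) = R(G) + Lf(X) and Rf(G + X) = L(G) + Rf(X) for every well-tempered game X. -/

import Mathlib

/-- Well-tempered scoring game trees: an integer (final score) or a position
with lists of Left and Right options. -/
inductive WT : Type where
  | int : ℤ → WT
  | node : List WT → List WT → WT

namespace WT

/-- Left options. -/
def lopts : WT → List WT
  | int _ => []
  | node L _ => L

/-- Right options. -/
def ropts : WT → List WT
  | int _ => []
  | node _ R => R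

theorem sizeOf_lt_of_mem_lopts : ∀ {G g : WT}, g ∈ G.lopts → sizeOf g < sizeOf G := by
  intro G g h
  cases G with
  | int n => simp [lopts] at h
  | node L R =>
    simp only [lopts] at h
    have h1 := List.sizeOf_lt_of_mem h
    have h2 : sizeOf (WT.node L R) = 1 + sizeOf L + sizeOf R := by simp
    omega

theorem sizeOf_lt_of_mem_ropts : ∀ {G g : WT}, g ∈ G.ropts → sizeOf g < sizeOf G := by
  intro G g h
  cases G with
  | int n => simp [ropts] at h
  | node L R =>
    simp only [ropts] at h
    have h1 := List.sizeOf_lt_of_mem h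
    have h2 : sizeOf (WT.node L R) = 1 + sizeOf L + sizeOf R := by simp
    omega

/-- Disjunctive sum of two games. -/
def add (G H : WT) : WT :=
  match G, H with
  | int m, int n => int (m + n)
  | G, H =>
    node ((G.lopts.attach.map fun g => add g.1 H) ++ (H.lopts.attach.map fun h => add G h.1))
         ((G.ropts.attach.map fun g => add g.1 H) ++ (H.ropts.attach.map fun h => add G h.1))
termination_by sizeOf G + sizeOf H
decreasing_by
  all_goals
    first
      | (have := sizeOf_lt_of_mem_lopts g.2; omega)
      | (have := sizeOf_lt_of_mem_lopts h.2; omega)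
      | (have := sizeOf_lt_of_mem_ropts g.2; omega)
      | (have := sizeOf_lt_of_mem_ropts h.2; omega)

/-- Negation of a game: swap players and negate scores. -/
def neg : WT → WT
  | int n => int (-n)
  | node L R =>
    node ((WT.node L R).ropts.attach.map fun g => neg g.1)
         ((WT.node L R).lopts.attach.map fun g => neg g.1)
termination_by G => sizeOf G
decreasing_by
  all_goals
    first
      | exact sizeOf_lt_of_mem_lopts g.2
      | exact sizeOf_lt_of_mem_ropts g.2

def lmax : List ℤ → ℤ
  | [] => 0
  | x :: xs => xs.foldl max x

def lmin : List ℤ → ℤ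
  | [] => 0
  | x :: xs => xs.foldl min x

/-- The pair (left outcome, right outcome). -/
def out : WT → ℤ × ℤ
  | int n => (n, n)
  | node L R =>
    (lmax ((WT.node L R).lopts.attach.map fun g => (out g.1).2),
     lmin ((WT.node L R).ropts.attach.map fun g => (out g.1).1))
termination_by G => sizeOf G
decreasing_by
  all_goals
    first
      | exact sizeOf_lt_of_mem_lopts g.2
      | exact sizeOf_lt_of_mem_ropts g.2

/-- Left outcome L(G): optimal score when Left moves first. -/
def Lout (G : WT) : ℤ := G.out.1

/-- Right outcome R(G): optimal score when Right moves first. -/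
def Rout (G : WT) : ℤ := G.out.2

/-- `IsWT G p` : `G` is a well-tempered game of parity `p`
(`false` = even-tempered, `true` = odd-tempered). -/
inductive IsWT : WT → Bool → Prop where
  | int (n : ℤ) : IsWT (WT.int n) false
  | node {L R : List WT} {p : Bool} (hL : L ≠ []) (hR : R ≠ [])
      (hLp : ∀ g ∈ L, IsWT g p) (hRp : ∀ g ∈ R, IsWT g p) :
      IsWT (WT.node L R) (!p)

/-- `G` is a well-tempered game (of some parity). -/
def Wt (G : WT) : Prop := ∃ p, IsWT G p

/-- Parity, computed structurally (`false` = even-tempered, `true` = odd-tempered;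
agrees with `IsWT` on well-tempered games). -/
def par : WT → Bool
  | int _ => false
  | node [] _ => true
  | node (g :: _) _ => !(par g)

/-- Final score under optimal play when Left moves last. -/
def Lf (G : WT) : ℤ := if G.par then G.Lout else G.Rout

/-- Final score under optimal play when Right moves last. -/
def Rf (G : WT) : ℤ := if G.par then G.Rout else G.Lout

/-- `G ≲ H` : for every well-tempered `X`, `L(G+X) ≤ L(H+X)` and `R(G+X) ≤ R(H+X)`. -/
def Le (G H : WT) : Prop :=
  ∀ X : WT, X.Wt → (G.add X).Lout ≤ (H.add X).Lout ∧ (G.add X).Rout ≤ (H.add X).Rout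

/-- `G ≳ H`. -/
def Ge (G H : WT) : Prop := Le H G

/-- `G ≈ H` : equivalence of scoring games. -/
def Equiv (G H : WT) : Prop :=
  ∀ X : WT, X.Wt → (G.add X).Lout = (H.add X).Lout ∧ (G.add X).Rout = (H.add X).Rout

/-- `G` and `H` are well-tempered with the same parity. -/
def SamePar (G H : WT) : Prop := ∃ p, IsWT G p ∧ IsWT H p

/-- `G` takes values in `S`: every integer subgame lies in `S`. -/
inductive Valued (S : Set ℤ) : WT → Prop where
  | int {n : ℤ} : n ∈ S → Valued S (WT.int n)
  | node {L R : List WT} : (∀ g ∈ L, Valued S g) → (∀ g ∈ R, Valued S g) →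
      Valued S (WT.node L R)

/-- `Subgame H G` : `H` is a subgame of `G`. -/
inductive Subgame : WT → WT → Prop where
  | refl (G : WT) : Subgame G G
  | left {H G' : WT} {L R : List WT} : G' ∈ L → Subgame H G' → Subgame H (WT.node L R)
  | right {H G' : WT} {L R : List WT} : G' ∈ R → Subgame H G' → Subgame H (WT.node L R)

/-- `gap G p` : supremum of `R(H) - L(H)` over subgames `H` of `G` of parity `p`
(as an element of `WithBot ℤ`; the supremum of the empty set is `⊥ = -∞`). -/
noncomputable def gap (G : WT) (p : Bool) : WithBot ℤ :=
  sSup {x : WithBot ℤ | ∃ H : WT, Subgame H G ∧ IsWT H p ∧ x = ((H.Rout - H.Lout : ℤ) : WithBot ℤ)}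

/-- Heating by `t`. -/
def heat (t : ℤ) : WT → WT
  | int n => int n
  | node L R =>
    node ((WT.node L R).lopts.attach.map fun g => (WT.int t).add (heat t g.1))
         ((WT.node L R).ropts.attach.map fun g => (WT.int (-t)).add (heat t g.1))
termination_by G => sizeOf G
decreasing_by
  all_goals
    first
      | exact sizeOf_lt_of_mem_lopts g.2
      | exact sizeOf_lt_of_mem_ropts g.2

end WT

/-!
Call a game quiet if every even-tempered subgame `K` has `R(K) ≤ L(K)`, i.e. `gap₀ ≤ 0`.
By induction on both summands, a quiet even-tempered `K` shifts each outcome of any `X` by an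
amount between `R(K)` and `L(K)`, and a quiet odd-tempered `K` satisfies `R(K+X) ≤ R(K) + L(X)`
and `L(K) + R(X) ≤ L(K+X)`: the first player moves in `K` to an option realising the
corresponding outcome of `K`, after which the even-tempered bounds apply.

For `G` itself we induct on `X`. By the odd-tempered bound, a Left move to `Gᴸ + X` is worth at
most `R(Gᴸ) + L(X) ≤ L(G) + L(X)`, and since `L(G) ≤ R(G)` this never beats Left's best move in
`X`; symmetrically for Right. Hence each outcome of `G + X` is that of `X` shifted by `R(G)` when
Left moves last and by `L(G)` when Right moves last.
-/

namespace WT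

theorem max?_eq_some_lmax {l : List ℤ} (h : l ≠ []) : l.max? = some (lmax l) := by
  cases l with
  | nil => contradiction
  | cons x xs => rfl

theorem min?_eq_some_lmin {l : List ℤ} (h : l ≠ []) : l.min? = some (lmin l) := by
  cases l with
  | nil => contradiction
  | cons x xs => rfl

theorem lmax_mem {l : List ℤ} (h : l ≠ []) : lmax l ∈ l :=
  List.max?_mem (max?_eq_some_lmax h)

theorem lmin_mem {l : List ℤ} (h : l ≠ []) : lmin l ∈ l :=
  List.min?_mem (min?_eq_some_lmin h)

theorem lmax_le_iff {l : List ℤ} (h : l ≠ []) {b : ℤ} : lmax l ≤ b ↔ ∀ x ∈ l, x ≤ b :=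
  List.max?_le_iff (max?_eq_some_lmax h)

theorem le_lmin_iff {l : List ℤ} (h : l ≠ []) {b : ℤ} : b ≤ lmin l ↔ ∀ x ∈ l, b ≤ x :=
  List.le_min?_iff (min?_eq_some_lmin h)

theorem le_lmax {l : List ℤ} {x : ℤ} (hx : x ∈ l) : x ≤ lmax l :=
  (lmax_le_iff (List.ne_nil_of_mem hx)).1 le_rfl x hx

theorem lmin_le {l : List ℤ} {x : ℤ} (hx : x ∈ l) : lmin l ≤ x :=
  (le_lmin_iff (List.ne_nil_of_mem hx)).1 le_rfl x hx

theorem Lout_node (L R : List WT) : (node L R).Lout = lmax (L.map Rout) := by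
  simp [Lout, out, lopts]; rfl

theorem Rout_node (L R : List WT) : (node L R).Rout = lmin (R.map Lout) := by
  simp [Rout, out, ropts]; rfl

@[simp] theorem Lout_int (n : ℤ) : (int n).Lout = n := by simp [Lout, out]

@[simp] theorem Rout_int (n : ℤ) : (int n).Rout = n := by simp [Rout, out]

theorem Rout_le_Lout_of_mem_lopts {G g : WT} (hg : g ∈ G.lopts) : g.Rout ≤ G.Lout := by
  cases G with
  | int => simp [lopts] at hg
  | node L R => rw [Lout_node]; exact le_lmax (List.mem_map_of_mem hg)

theorem Rout_le_Lout_of_mem_ropts {G g : WT} (hg : g ∈ G.ropts) : G.Rout ≤ g.Lout := by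
  cases G with
  | int => simp [ropts] at hg
  | node L R => rw [Rout_node]; exact lmin_le (List.mem_map_of_mem hg)

theorem Lout_le {G : WT} {b : ℤ} (hne : G.lopts ≠ []) (h : ∀ g ∈ G.lopts, g.Rout ≤ b) :
    G.Lout ≤ b := by
  cases G with
  | int => simp [lopts] at hne
  | node L R =>
    rw [Lout_node]; exact (lmax_le_iff (mt List.map_eq_nil_iff.1 hne)).2 (by simpa using h)

theorem le_Rout {G : WT} {b : ℤ} (hne : G.ropts ≠ []) (h : ∀ g ∈ G.ropts, b ≤ g.Lout) :
    b ≤ G.Rout := by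
  cases G with
  | int => simp [ropts] at hne
  | node L R =>
    rw [Rout_node]; exact (le_lmin_iff (mt List.map_eq_nil_iff.1 hne)).2 (by simpa using h)

theorem exists_mem_lopts_Rout_eq {G : WT} (hne : G.lopts ≠ []) :
    ∃ g ∈ G.lopts, g.Rout = G.Lout := by
  cases G with
  | int => simp [lopts] at hne
  | node L R => rw [Lout_node]; exact List.mem_map.1 (lmax_mem (mt List.map_eq_nil_iff.1 hne))

theorem exists_mem_ropts_Lout_eq {G : WT} (hne : G.ropts ≠ []) :
    ∃ g ∈ G.ropts, g.Lout = G.Rout := by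
  cases G with
  | int => simp [ropts] at hne
  | node L R => rw [Rout_node]; exact List.mem_map.1 (lmin_mem (mt List.map_eq_nil_iff.1 hne))

theorem int_add_int (m n : ℤ) : (int m).add (int n) = int (m + n) := by
  rw [add]

theorem lopts_add (G H : WT) :
    (G.add H).lopts = G.lopts.map (·.add H) ++ H.lopts.map (G.add ·) := by
  cases G <;> cases H <;> rw [add.eq_def] <;> simp [lopts]

theorem ropts_add (G H : WT) :
    (G.add H).ropts = G.ropts.map (·.add H) ++ H.ropts.map (G.add ·) := by
  cases G <;> cases H <;> rw [add.eq_def] <;> simp [ropts]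

theorem mem_lopts_add_left {G H g : WT} (hg : g ∈ G.lopts) : g.add H ∈ (G.add H).lopts := by
  rw [lopts_add]; exact List.mem_append_left _ (List.mem_map_of_mem hg)

theorem mem_lopts_add_right {G H h : WT} (hh : h ∈ H.lopts) : G.add h ∈ (G.add H).lopts := by
  rw [lopts_add]; exact List.mem_append_right _ (List.mem_map_of_mem hh)

theorem mem_ropts_add_left {G H g : WT} (hg : g ∈ G.ropts) : g.add H ∈ (G.add H).ropts := by
  rw [ropts_add]; exact List.mem_append_left _ (List.mem_map_of_mem hg)

theorem mem_ropts_add_right {G H h : WT} (hh : h ∈ H.ropts) : G.add h ∈ (G.add H).ropts := by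
  rw [ropts_add]; exact List.mem_append_right _ (List.mem_map_of_mem hh)

theorem le_Lout_add {G X : WT} {c : ℤ} (hX : X.lopts ≠ [])
    (h : ∀ x ∈ X.lopts, c + x.Rout ≤ (G.add x).Rout) : c + X.Lout ≤ (G.add X).Lout := by
  obtain ⟨x, hx, hxX⟩ := exists_mem_lopts_Rout_eq hX
  calc c + X.Lout = c + x.Rout := by rw [hxX]
    _ ≤ (G.add x).Rout := h x hx
    _ ≤ (G.add X).Lout := Rout_le_Lout_of_mem_lopts (mem_lopts_add_right hx)

theorem Rout_add_le {G X : WT} {c : ℤ} (hX : X.ropts ≠ [])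
    (h : ∀ x ∈ X.ropts, (G.add x).Lout ≤ c + x.Lout) : (G.add X).Rout ≤ c + X.Rout := by
  obtain ⟨x, hx, hxX⟩ := exists_mem_ropts_Lout_eq hX
  calc (G.add X).Rout ≤ (G.add x).Lout := Rout_le_Lout_of_mem_ropts (mem_ropts_add_right hx)
    _ ≤ c + x.Lout := h x hx
    _ = c + X.Rout := by rw [hxX]

theorem Lout_add_le {G X : WT} {c : ℤ} (hne : G.lopts ≠ [] ∨ X.lopts ≠ []) (hc : G.Lout ≤ c)
    (hG : ∀ g ∈ G.lopts, (g.add X).Rout ≤ g.Rout + X.Lout)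
    (hX : ∀ x ∈ X.lopts, (G.add x).Rout ≤ c + x.Rout) : (G.add X).Lout ≤ c + X.Lout := by
  refine Lout_le (by rw [lopts_add]; rcases hne with h | h <;> simp [h]) fun y hy => ?_
  obtain ⟨g, hg, rfl⟩ | ⟨x, hx, rfl⟩ := by simpa [lopts_add] using hy
  · linarith [hG g hg, Rout_le_Lout_of_mem_lopts hg]
  · linarith [hX x hx, Rout_le_Lout_of_mem_lopts hx]

theorem le_Rout_add {G X : WT} {c : ℤ} (hne : G.ropts ≠ [] ∨ X.ropts ≠ []) (hc : c ≤ G.Rout)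
    (hG : ∀ g ∈ G.ropts, g.Lout + X.Rout ≤ (g.add X).Lout)
    (hX : ∀ x ∈ X.ropts, c + x.Lout ≤ (G.add x).Lout) : c + X.Rout ≤ (G.add X).Rout := by
  refine le_Rout (by rw [ropts_add]; rcases hne with h | h <;> simp [h]) fun y hy => ?_
  obtain ⟨g, hg, rfl⟩ | ⟨x, hx, rfl⟩ := by simpa [ropts_add] using hy
  · linarith [hG g hg, Rout_le_Lout_of_mem_ropts hg]
  · linarith [hX x hx, Rout_le_Lout_of_mem_ropts hx]

theorem IsWT.of_options {G : WT} {p : Bool} (hL : G.lopts ≠ []) (hR : G.ropts ≠ [])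
    (hLp : ∀ g ∈ G.lopts, IsWT g p) (hRp : ∀ g ∈ G.ropts, IsWT g p) : IsWT G (!p) := by
  cases G with
  | int => simp [lopts] at hL
  | node L R => exact .node hL hR hLp hRp

theorem IsWT.add_of_options {G H : WT} {r : Bool}
    (hne : (G.lopts ≠ [] ∧ G.ropts ≠ []) ∨ (H.lopts ≠ [] ∧ H.ropts ≠ []))
    (hG : ∀ g ∈ G.lopts ++ G.ropts, IsWT (g.add H) r)
    (hH : ∀ h ∈ H.lopts ++ H.ropts, IsWT (G.add h) r) : IsWT (G.add H) (!r) := by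
  refine .of_options ?_ ?_ ?_ ?_
  · rw [lopts_add]; rcases hne with ⟨h, -⟩ | ⟨h, -⟩ <;> simp [h]
  · rw [ropts_add]; rcases hne with ⟨-, h⟩ | ⟨-, h⟩ <;> simp [h]
  · simp only [lopts_add, List.mem_append, List.mem_map]
    rintro _ (⟨g, hg, rfl⟩ | ⟨h, hh, rfl⟩)
    exacts [hG g (List.mem_append_left _ hg), hH h (List.mem_append_left _ hh)]
  · simp only [ropts_add, List.mem_append, List.mem_map]
    rintro _ (⟨g, hg, rfl⟩ | ⟨h, hh, rfl⟩)
    exacts [hG g (List.mem_append_right _ hg), hH h (List.mem_append_right _ hh)]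

theorem IsWT.add {G H : WT} {p q : Bool} (hG : IsWT G p) (hH : IsWT H q) :
    IsWT (G.add H) (p ^^ q) := by
  induction hG generalizing H q with
  | int m =>
    induction hH with
    | int n => rw [int_add_int]; exact .int _
    | node hL hR _ _ ihL ihR =>
      rw [Bool.xor_not]
      exact .add_of_options (.inr ⟨hL, hR⟩) (by simp [lopts, ropts])
        fun h hh => (List.mem_append.1 hh).elim (ihL h) (ihR h)
  | @node L R p hL hR _ _ ihL ihR =>
    induction hH with
    | int n =>
      rw [Bool.not_xor]
      exact .add_of_options (.inl ⟨hL, hR⟩)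
        (fun g hg => (List.mem_append.1 hg).elim (ihL g · (.int n)) (ihR g · (.int n)))
        (by simp [lopts, ropts])
    | @node L' R' q hL' hR' hLp' hRp' ihL' ihR' =>
      have hH : IsWT (.node L' R') (!q) := .node hL' hR' hLp' hRp'
      rw [Bool.not_xor]
      refine .add_of_options (.inl ⟨hL, hR⟩)
        (fun g hg => (List.mem_append.1 hg).elim (ihL g · hH) (ihR g · hH)) fun h hh => ?_
      rw [Bool.xor_not, ← Bool.not_xor]
      exact (List.mem_append.1 hh).elim (ihL' h) (ihR' h)

theorem IsWT.of_mem_lopts {G g : WT} {p : Bool} (hG : IsWT G p) (hg : g ∈ G.lopts) :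
    IsWT g (!p) := by
  cases hG with
  | int => simp [lopts] at hg
  | node _ _ hLp _ => simpa using hLp g hg

theorem IsWT.of_mem_ropts {G g : WT} {p : Bool} (hG : IsWT G p) (hg : g ∈ G.ropts) :
    IsWT g (!p) := by
  cases hG with
  | int => simp [ropts] at hg
  | node _ _ _ hRp => simpa using hRp g hg

theorem IsWT.par_eq {G : WT} {p : Bool} (h : IsWT G p) : G.par = p := by
  induction h with
  | int => rfl
  | @node L R p hL _ _ _ ih _ =>
    obtain ⟨g, gs, rfl⟩ := List.exists_cons_of_ne_nil hL
    simp [par, ih g (by simp)]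

theorem IsWT.add_int {G : WT} {p : Bool} (hG : IsWT G p) (n : ℤ) :
    (G.add (.int n)).Lout = G.Lout + n ∧ (G.add (.int n)).Rout = G.Rout + n := by
  induction hG with
  | int m => simp [int_add_int]
  | @node L R _ hL hR _ _ ihL ihR =>
    refine ⟨le_antisymm ?_ ?_, le_antisymm ?_ ?_⟩
    · simpa using Lout_add_le (G := .node L R) (X := .int n) (.inl hL) le_rfl
        (fun g hg => by simpa using (ihL g hg).2.le) (by simp [lopts])
    · obtain ⟨g, hg, hgG⟩ := exists_mem_lopts_Rout_eq (G := .node L R) hL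
      linarith [(ihL g hg).2, Rout_le_Lout_of_mem_lopts (mem_lopts_add_left (H := .int n) hg)]
    · obtain ⟨g, hg, hgG⟩ := exists_mem_ropts_Lout_eq (G := .node L R) hR
      linarith [(ihR g hg).1, Rout_le_Lout_of_mem_ropts (mem_ropts_add_left (H := .int n) hg)]
    · simpa using le_Rout_add (G := .node L R) (X := .int n) (.inl hR) le_rfl
        (fun g hg => by simpa using (ihR g hg).1.ge) (by simp [ropts])

def OddBounds (K : WT) : Prop :=
  ∀ X : WT, X.Wt → (K.add X).Rout ≤ K.Rout + X.Lout ∧ K.Lout + X.Rout ≤ (K.add X).Lout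

def EvenBounds (K : WT) : Prop :=
  ∀ X : WT, X.Wt →
    (K.Rout + X.Lout ≤ (K.add X).Lout ∧ (K.add X).Lout ≤ K.Lout + X.Lout) ∧
    (K.Rout + X.Rout ≤ (K.add X).Rout ∧ (K.add X).Rout ≤ K.Lout + X.Rout)

theorem evenBounds_of_options {K : WT} (hK : IsWT K false) (hRL : K.Rout ≤ K.Lout)
    (hL : ∀ g ∈ K.lopts, OddBounds g) (hR : ∀ g ∈ K.ropts, OddBounds g) : EvenBounds K := by
  rintro X ⟨q, hX⟩
  induction hX with
  | int n =>
    obtain ⟨hLn, hRn⟩ := hK.add_int n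
    simp only [Lout_int, Rout_int, hLn, hRn]
    omega
  | node hXL hXR hXLp hXRp ihL ihR =>
    have hX : Wt (.node _ _) := ⟨_, .node hXL hXR hXLp hXRp⟩
    exact ⟨⟨le_Lout_add hXL fun x hx => (ihL x hx).2.1,
        Lout_add_le (.inr hXL) le_rfl (fun g hg => (hL g hg _ hX).1) fun x hx => (ihL x hx).2.2⟩,
      ⟨le_Rout_add (.inr hXR) le_rfl (fun g hg => (hR g hg _ hX).2) fun x hx => (ihR x hx).1.1,
        Rout_add_le hXR fun x hx => (ihR x hx).1.2⟩⟩

theorem oddBounds_of_options {K : WT} (hKL : K.lopts ≠ []) (hKR : K.ropts ≠ [])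
    (hL : ∀ g ∈ K.lopts, EvenBounds g) (hR : ∀ g ∈ K.ropts, EvenBounds g) : OddBounds K := by
  intro X hX
  obtain ⟨l, hl, hlK⟩ := exists_mem_lopts_Rout_eq hKL
  obtain ⟨r, hr, hrK⟩ := exists_mem_ropts_Lout_eq hKR
  constructor
  · calc (K.add X).Rout ≤ (r.add X).Lout := Rout_le_Lout_of_mem_ropts (mem_ropts_add_left hr)
      _ ≤ r.Lout + X.Lout := (hR r hr X hX).1.2
      _ = K.Rout + X.Lout := by rw [hrK]
  · calc K.Lout + X.Rout = l.Rout + X.Rout := by rw [hlK]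
      _ ≤ (l.add X).Rout := (hL l hl X hX).2.1
      _ ≤ (K.add X).Lout := Rout_le_Lout_of_mem_lopts (mem_lopts_add_left hl)

def Quiet (G : WT) : Prop := ∀ K : WT, Subgame K G → IsWT K false → K.Rout ≤ K.Lout

theorem Quiet.of_mem_lopts {G g : WT} (hG : Quiet G) (hg : g ∈ G.lopts) : Quiet g := by
  cases G with
  | int => simp [lopts] at hg
  | node L R => exact fun K hK => hG K (.left hg hK)

theorem Quiet.of_mem_ropts {G g : WT} (hG : Quiet G) (hg : g ∈ G.ropts) : Quiet g := by
  cases G with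
  | int => simp [ropts] at hg
  | node L R => exact fun K hK => hG K (.right hg hK)

theorem Quiet.bounds {K : WT} {p : Bool} (hQ : Quiet K) (hK : IsWT K p) :
    (p = false → EvenBounds K) ∧ (p = true → OddBounds K) := by
  induction hK with
  | int m =>
    exact ⟨fun _ => evenBounds_of_options (.int m) (hQ _ (.refl _) (.int m)) (by simp [lopts])
      (by simp [ropts]), nofun⟩
  | @node L R p hL hR hLp hRp ihL ihR =>
    cases p
    · exact ⟨nofun, fun _ => oddBounds_of_options hL hR
        (fun g hg => (ihL g hg (hQ.of_mem_lopts hg)).1 rfl)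
        (fun g hg => (ihR g hg (hQ.of_mem_ropts hg)).1 rfl)⟩
    · have hK : IsWT (.node L R) false := .node hL hR hLp hRp
      exact ⟨fun _ => evenBounds_of_options hK (hQ _ (.refl _) hK)
        (fun g hg => (ihL g hg (hQ.of_mem_lopts hg)).2 rfl)
        (fun g hg => (ihR g hg (hQ.of_mem_ropts hg)).2 rfl), nofun⟩

theorem quiet_of_gap_eq_zero {G : WT} (h : G.gap false = ((0 : ℤ) : WithBot ℤ)) : Quiet G := by
  intro K hK hKe
  -- Unbounded sets have supremum `⊥` in `WithBot ℤ`, so `gap = 0` forces boundedness.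
  have hbdd : BddAbove {x : WithBot ℤ | ∃ H : WT, Subgame H G ∧ IsWT H false ∧
      x = ((H.Rout - H.Lout : ℤ) : WithBot ℤ)} := by
    by_contra hnot
    rw [gap, WithBot.sSup_of_not_bddAbove hnot] at h
    exact WithBot.bot_ne_coe h
  have hle := le_csSup hbdd ⟨K, hK, hKe, rfl⟩
  rw [← gap, h, WithBot.coe_le_coe] at hle
  omega

theorem outcomes_add_of_oddBounds {G : WT} (hG : IsWT G false)
    (hL : ∀ g ∈ G.lopts, OddBounds g) (hR : ∀ g ∈ G.ropts, OddBounds g) (hout : G.Lout ≤ G.Rout)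
    {X : WT} {q : Bool} (hX : IsWT X q) :
    (q = true → (G.add X).Lout = G.Rout + X.Lout ∧ (G.add X).Rout = G.Lout + X.Rout) ∧
    (q = false → (G.add X).Rout = G.Rout + X.Rout ∧ (G.add X).Lout = G.Lout + X.Lout) := by
  induction hX with
  | int n =>
    obtain ⟨hLn, hRn⟩ := hG.add_int n
    exact ⟨nofun, fun _ => by simp [hLn, hRn]⟩
  | @node XL XR q hXL hXR hXLp hXRp ihL ihR =>
    have hX : Wt (.node XL XR) := ⟨_, .node hXL hXR hXLp hXRp⟩
    have hGL := fun g hg => (hL g hg _ hX).1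
    have hGR := fun g hg => (hR g hg _ hX).2
    cases q
    · refine ⟨fun _ => ⟨le_antisymm ?_ ?_, le_antisymm ?_ ?_⟩, nofun⟩
      · exact Lout_add_le (.inr hXL) hout hGL fun x hx => ((ihL x hx).2 rfl).1.le
      · exact le_Lout_add hXL fun x hx => ((ihL x hx).2 rfl).1.ge
      · exact Rout_add_le hXR fun x hx => ((ihR x hx).2 rfl).2.le
      · exact le_Rout_add (.inr hXR) hout hGR fun x hx => ((ihR x hx).2 rfl).2.ge
    · refine ⟨nofun, fun _ => ⟨le_antisymm ?_ ?_, le_antisymm ?_ ?_⟩⟩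
      · exact Rout_add_le hXR fun x hx => ((ihR x hx).1 rfl).1.le
      · exact le_Rout_add (.inr hXR) le_rfl hGR fun x hx => ((ihR x hx).1 rfl).1.ge
      · exact Lout_add_le (.inr hXL) le_rfl hGL fun x hx => ((ihL x hx).1 rfl).2.le
      · exact le_Lout_add hXL fun x hx => ((ihL x hx).1 rfl).2.ge

end WT

/-- if G is even-tempered, every option of G has gap₀ = 0, and L(G) ≤ R(G),
then G ≈₊ R(G) and G ≈₋ L(G): Lf(G+X) = R(G) + Lf(X) and Rf(G+X) = L(G) + Rf(X) for all X. -/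
theorem gap_rule (G : WT) (hG : WT.IsWT G false)
    (hL : ∀ g ∈ G.lopts, g.gap false = ((0 : ℤ) : WithBot ℤ))
    (hR : ∀ g ∈ G.ropts, g.gap false = ((0 : ℤ) : WithBot ℤ))
    (hout : G.Lout ≤ G.Rout) :
    ∀ X : WT, X.Wt → (G.add X).Lf = G.Rout + X.Lf ∧ (G.add X).Rf = G.Lout + X.Rf := by
  rintro X ⟨q, hX⟩
  have h := WT.outcomes_add_of_oddBounds hG
    (fun g hg => ((WT.quiet_of_gap_eq_zero (hL g hg)).bounds (hG.of_mem_lopts hg)).2 rfl)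
    (fun g hg => ((WT.quiet_of_gap_eq_zero (hR g hg)).bounds (hG.of_mem_ropts hg)).2 rfl)
    hout hX
  rw [WT.Lf, WT.Rf, WT.Lf, WT.Rf, hX.par_eq, (hG.add hX).par_eq]
  cases q
  · simpa using h.2 rfl
  · simpa using h.1 rfl
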